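/- arXiv:1112.1313 — 4 statements merged into one kernel-verified Lean document; each statement's English description precedes it below -/
import Mathlib

section
/- For any permutation π of {1,…,n} with n ≥ 4, the minimum size of a target set that activates all vertices of the cycle permutation graph P_π(C_n) under constant threshold 2 is ⌈(n+1)/2⌉. -/
/-- Activation closure: `v` eventually becomes active when starting from seed set `S`
in graph `G` with thresholds `θ` (a vertex activates once at least `θ v` of its
neighbors are active). -/
inductive Activated {V : Type*} (G : SimpleGraph V) (θ : V → ℕ) (S : Set V) : V → Prop
  | base {v : V} : v ∈ S → Activated G θ S v
  | step {v : V} (T : Finset V) (hadj : ∀ u ∈ T, G.Adj u v) (hcard : θ v ≤ T.card)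
      (hact : ∀ u ∈ T, Activated G θ S u) : Activated G θ S v

/-- Minimum size of a target set whose activation closure is all of `V`. -/
noncomputable def minSeed {V : Type*} [Fintype V] (G : SimpleGraph V) (θ : V → ℕ) : ℕ :=
  sInf {k | ∃ S : Finset V, S.card = k ∧ ∀ v, Activated G θ (↑S) v}

/-- The cycle permutation graph `P_π(C_n)`: two disjoint copies of the `n`-cycle
(`(false, i)` are the `v_i`, `(true, i)` are the `u_i`) together with the
matching edges `v_i u_{π(i)}`. -/
def cyclePermGraph (n : ℕ) [NeZero n] (π : Equiv.Perm (ZMod n)) :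
    SimpleGraph (Bool × ZMod n) :=
  SimpleGraph.fromRel (fun a b =>
    (a.1 = b.1 ∧ b.2 = a.2 + 1) ∨
    (a.1 = false ∧ b.1 = true ∧ b.2 = π a.2))

/-!
Lower bound: let the active set grow one vertex at a time. Each new vertex brings at least two
edges into the set of edges spanned by the active vertices, and the last one brings all three of
its edges, so `2 (2n - |S|) < 3n` for every target set `S` of the 3-regular graph `P_π(C_n)`.

Upper bound: seed `v_0, v_2, …, v_{2(⌊n/2⌋ - 1)}` and `u_{π(-1)}`. Then `v_{-1}` activates from
`v_0` and `u_{π(-1)}`, every other `v_i` from its two cycle neighbours, and finally the `u`-cycle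
is swept from `u_{π(-1)}`, each `u_j` having its partner `v_{π⁻¹ j}` already active.
-/

open Finset

theorem ZMod.natCast_ne_zero_of_lt {n k : ℕ} (hk0 : 0 < k) (hkn : k < n) : (k : ZMod n) ≠ 0 := by
  rw [Ne, ZMod.natCast_eq_zero_iff]
  exact fun h => (Nat.le_of_dvd hk0 h).not_gt hkn

theorem ZMod.forall_of_add_one {n : ℕ} [NeZero n] {p : ZMod n → Prop} (a : ZMod n) (ha : p a)
    (hstep : ∀ x, p x → p (x + 1)) (x : ZMod n) : p x := by
  have hfrom : ∀ k : ℕ, p (a + k) := by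
    intro k
    induction k with
    | zero => simpa using ha
    | succ k ih => simpa [add_assoc] using hstep _ ih
  simpa using hfrom (x - a).val

namespace Activated

variable {V : Type*} {G : SimpleGraph V} {θ : V → ℕ} {S : Set V}

theorem mem_of_closed {A : Set V} (hSA : S ⊆ A)
    (hA : ∀ v (T : Finset V), (∀ u ∈ T, G.Adj u v) → θ v ≤ #T → ↑T ⊆ A → v ∈ A) {v : V}
    (hv : Activated G θ S v) : v ∈ A := by
  induction hv with
  | base hvS => exact hSA hvS
  | step T hadj hcard _ ih => exact hA _ T hadj hcard ih

theorem of_adj_of_adj {x y v : V} (hθ : θ v ≤ 2) (hxy : x ≠ y) (hx : G.Adj x v)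
    (hy : G.Adj y v) (hAx : Activated G θ S x) (hAy : Activated G θ S y) :
    Activated G θ S v := by
  classical
  refine .step {x, y} ?_ ?_ ?_
  · simp [hx, hy]
  · rwa [card_pair hxy]
  · simp [hAx, hAy]

end Activated

theorem le_minSeed {V : Type*} [Fintype V] {G : SimpleGraph V} {θ : V → ℕ} {k : ℕ}
    (h : ∀ S : Finset V, (∀ v, Activated G θ ↑S v) → k ≤ #S) : k ≤ minSeed G θ :=
  le_csInf ⟨_, univ, rfl, fun v => .base (mem_coe.2 (mem_univ v))⟩
    (by rintro _ ⟨S, rfl, hS⟩; exact h S hS)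

theorem minSeed_le {V : Type*} [Fintype V] {G : SimpleGraph V} {θ : V → ℕ} {S : Finset V}
    (hS : ∀ v, Activated G θ ↑S v) : minSeed G θ ≤ #S :=
  Nat.sInf_le ⟨S, rfl, hS⟩

section LowerBound

variable {V : Type*} [Fintype V] [DecidableEq V] {G : SimpleGraph V} [DecidableRel G.Adj]
  {θ : V → ℕ}

theorem exists_activation_step {S A : Finset V} (hact : ∀ v, Activated G θ ↑S v) (hSA : S ⊆ A)
    (hA : A ≠ univ) : ∃ v ∉ A, θ v ≤ #(G.neighborFinset v ∩ A) := by
  by_contra! hclosed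
  refine hA (eq_univ_iff_forall.2 fun w =>
    Activated.mem_of_closed (A := ↑A) (mod_cast hSA) (fun v T hadj hcard hTA => ?_) (hact w))
  by_contra hv
  refine (hclosed v hv).not_ge (hcard.trans (card_le_card fun u hu => ?_))
  simp [mem_coe.1 (hTA hu), (hadj u hu).symm]

theorem card_edgeFinset_inter_sym2_add_le {A : Finset V} {v : V} (hv : v ∉ A) :
    #(G.edgeFinset ∩ A.sym2) + #(G.neighborFinset v ∩ A) ≤
      #(G.edgeFinset ∩ (insert v A).sym2) := by
  have hdisj : Disjoint (G.edgeFinset ∩ A.sym2) ((G.neighborFinset v ∩ A).image (s(v, ·))) := by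
    simp only [disjoint_left, mem_inter, mem_sym2_iff, mem_image]
    rintro _ ⟨_, hA⟩ ⟨u, _, rfl⟩
    exact hv (hA v (Sym2.mem_mk_left v u))
  rw [← card_image_of_injective (G.neighborFinset v ∩ A) fun _ _ => Sym2.congr_right.1,
    ← card_union_of_disjoint hdisj]
  refine card_le_card (union_subset (inter_subset_inter_left (sym2_mono (subset_insert v A)))
    fun e he => ?_)
  obtain ⟨u, hu, rfl⟩ := mem_image.1 he
  simp only [mem_inter, SimpleGraph.mem_neighborFinset] at hu
  simp [hu.1, hu.2]

theorem sum_lt_card_edgeFinset {S : Finset V} (hact : ∀ v, Activated G θ ↑S v)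
    (hθ : ∀ v ∉ S, θ v < G.degree v) (hS : S ≠ univ) :
    ∑ v ∈ Sᶜ, θ v < #G.edgeFinset := by
  -- A maximal proper set reachable from `S` by activation steps; one more step reaches `univ`.
  obtain ⟨A, ⟨hSA, hA, hsum⟩, hmax⟩ := Set.Finite.exists_maximal
    (s := {A : Finset V | S ⊆ A ∧ A ≠ univ ∧ ∑ v ∈ A \ S, θ v ≤ #(G.edgeFinset ∩ A.sym2)})
    (Set.toFinite _) ⟨S, subset_rfl, hS, by simp⟩
  obtain ⟨v, hvA, hv⟩ := exists_activation_step hact hSA hA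
  have hvS : v ∉ S := fun h => hvA (hSA h)
  have hsum' : ∑ u ∈ insert v A \ S, θ u ≤ #(G.edgeFinset ∩ (insert v A).sym2) := by
    rw [insert_sdiff_of_notMem _ hvS, sum_insert (fun h => hvA (mem_sdiff.1 h).1)]
    grw [← card_edgeFinset_inter_sym2_add_le hvA, hsum, hv, add_comm]
  have hlast : insert v A = univ := by
    by_contra h
    exact hvA (hmax ⟨hSA.trans (subset_insert v A), h, hsum'⟩ (subset_insert v A)
      (mem_insert_self v A))
  have hnbr : G.neighborFinset v ∩ A = G.neighborFinset v := by
    refine inter_eq_left.2 fun u hu => ?_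
    have huv : u ≠ v := G.ne_of_adj ((G.mem_neighborFinset v u).1 hu).symm
    have hu' : u ∈ insert v A := hlast ▸ mem_univ u
    simpa [huv] using hu'
  calc ∑ u ∈ Sᶜ, θ u = θ v + ∑ u ∈ A \ S, θ u := by
        rw [compl_eq_univ_sdiff, ← hlast, insert_sdiff_of_notMem _ hvS,
          sum_insert (fun h => hvA (mem_sdiff.1 h).1)]
    _ < G.degree v + #(G.edgeFinset ∩ A.sym2) := add_lt_add_of_lt_of_le (hθ v hvS) hsum
    _ ≤ #(G.edgeFinset ∩ (insert v A).sym2) := by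
        rw [← G.card_neighborFinset_eq_degree, ← hnbr, add_comm]
        exact card_edgeFinset_inter_sym2_add_le hvA
    _ = #G.edgeFinset := by simp [hlast]

end LowerBound

section CyclePermGraph

variable {n : ℕ} [NeZero n] {π : Equiv.Perm (ZMod n)}

instance : DecidableRel (cyclePermGraph n π).Adj :=
  fun _ _ => inferInstanceAs (Decidable (_ ∧ _))

theorem cyclePermGraph_adj_add_one (hn : 1 < n) (b : Bool) (i : ZMod n) :
    (cyclePermGraph n π).Adj (b, i) (b, i + 1) := by
  have h1 : ((1 : ℕ) : ZMod n) ≠ 0 := ZMod.natCast_ne_zero_of_lt one_pos hn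
  simp_all [cyclePermGraph]

theorem cyclePermGraph_adj_apply (i : ZMod n) :
    (cyclePermGraph n π).Adj (false, i) (true, π i) := by
  simp [cyclePermGraph]

theorem cyclePermGraph_neighborFinset_false (hn : 1 < n) (i : ZMod n) :
    (cyclePermGraph n π).neighborFinset (false, i) =
      {(false, i + 1), (false, i - 1), (true, π i)} := by
  have h1 : ((1 : ℕ) : ZMod n) ≠ 0 := ZMod.natCast_ne_zero_of_lt one_pos hn
  ext ⟨_ | _, j⟩ <;> rw [SimpleGraph.mem_neighborFinset] <;> simp [cyclePermGraph]
  grind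

theorem cyclePermGraph_neighborFinset_true (hn : 1 < n) (j : ZMod n) :
    (cyclePermGraph n π).neighborFinset (true, j) =
      {(true, j + 1), (true, j - 1), (false, π.symm j)} := by
  have h1 : ((1 : ℕ) : ZMod n) ≠ 0 := ZMod.natCast_ne_zero_of_lt one_pos hn
  ext ⟨_ | _, i⟩ <;> rw [SimpleGraph.mem_neighborFinset] <;> simp [cyclePermGraph] <;> grind

theorem cyclePermGraph_degree (hn : 2 < n) (v : Bool × ZMod n) :
    (cyclePermGraph n π).degree v = 3 := by
  have h2 : ((2 : ℕ) : ZMod n) ≠ 0 := ZMod.natCast_ne_zero_of_lt two_pos hn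
  have hpm (i : ZMod n) : i + 1 ≠ i - 1 := fun h => h2 (by push_cast; linear_combination h)
  rw [← SimpleGraph.card_neighborFinset_eq_degree]
  obtain ⟨_ | _, i⟩ := v
  · rw [cyclePermGraph_neighborFinset_false (by omega)]
    exact card_eq_three.2 ⟨_, _, _, by simpa using hpm i, by simp, by simp, rfl⟩
  · rw [cyclePermGraph_neighborFinset_true (by omega)]
    exact card_eq_three.2 ⟨_, _, _, by simpa using hpm i, by simp, by simp, rfl⟩

theorem card_edgeFinset_cyclePermGraph (hn : 2 < n) :
    #(cyclePermGraph n π).edgeFinset = 3 * n := by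
  have hsum := (cyclePermGraph n π).sum_degrees_eq_twice_card_edges
  simp only [cyclePermGraph_degree hn, sum_const, card_univ, Fintype.card_prod,
    Fintype.card_bool, ZMod.card, smul_eq_mul] at hsum
  omega

theorem Activated.cyclePermGraph_true_of_false {S : Set (Bool × ZMod n)} (hn : 1 < n)
    (hfalse : ∀ i, Activated (cyclePermGraph n π) (fun _ => 2) S (false, i)) {j₀ : ZMod n}
    (hj₀ : Activated (cyclePermGraph n π) (fun _ => 2) S (true, j₀)) (j : ZMod n) :
    Activated (cyclePermGraph n π) (fun _ => 2) S (true, j) := by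
  refine ZMod.forall_of_add_one (p := fun j => Activated _ _ S (true, j)) j₀ hj₀
    (fun x hx => ?_) j
  have hmatch := cyclePermGraph_adj_apply (π := π) (π.symm (x + 1))
  rw [Equiv.apply_symm_apply] at hmatch
  exact .of_adj_of_adj le_rfl (by simp) (cyclePermGraph_adj_add_one hn true x) hmatch hx
    (hfalse _)

def cyclePermSeed (n : ℕ) [NeZero n] (π : Equiv.Perm (ZMod n)) : Finset (Bool × ZMod n) :=
  insert (true, π (-1)) ((range (n / 2)).image fun k : ℕ => (false, 2 * (k : ZMod n)))

theorem card_cyclePermSeed : #(cyclePermSeed n π) = n / 2 + 1 := by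
  rw [cyclePermSeed, card_insert_of_notMem (by simp), card_image_of_injOn, card_range]
  intro k hk l hl hkl
  simp only [coe_range, Set.mem_Iio, Prod.mk.injEq, true_and] at hk hl hkl
  have hmod := (ZMod.natCast_eq_natCast_iff' (2 * k) (2 * l) n).1 (by push_cast; exact hkl)
  rw [Nat.mod_eq_of_lt (by omega), Nat.mod_eq_of_lt (by omega)] at hmod
  omega

theorem activated_cyclePermSeed_false (hn : 2 < n) (i : ZMod n) :
    Activated (cyclePermGraph n π) (fun _ => 2) ↑(cyclePermSeed n π) (false, i) := by
  set A := Activated (cyclePermGraph n π) (fun _ => 2) ↑(cyclePermSeed n π)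
  have hseed (k : ℕ) (hk : k < n / 2) : A (false, 2 * k) :=
    .base (mem_insert_of_mem (mem_image_of_mem _ (mem_range.2 hk)))
  have hneg_one : A (false, -1) := by
    have hcycle := cyclePermGraph_adj_add_one (π := π) (by omega) false (-1)
    rw [neg_add_cancel] at hcycle
    refine .of_adj_of_adj le_rfl (by simp) hcycle.symm (cyclePermGraph_adj_apply _).symm ?_
      (.base (mem_insert_self _ _))
    simpa using hseed 0 (by omega)
  have heven (k : ℕ) (hk : 2 * k ≤ n) : A (false, 2 * k) := by
    rcases (by omega : k < n / 2 ∨ 2 * k = n ∨ 2 * k + 1 = n) with hk | hk | hk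
    · exact hseed k hk
    · rw [← Nat.cast_ofNat, ← Nat.cast_mul, hk, ZMod.natCast_self]
      simpa using hseed 0 (by omega)
    · have hneg : (2 * k : ZMod n) = -1 :=
        eq_neg_of_add_eq_zero_left (by rw [← ZMod.natCast_self n, ← hk]; push_cast; ring)
      rwa [hneg]
  have hodd (k : ℕ) (hk : 2 * k + 1 < n) : A (false, 2 * k + 1) := by
    have h2 : ((2 : ℕ) : ZMod n) ≠ 0 := ZMod.natCast_ne_zero_of_lt two_pos hn
    have hnext := cyclePermGraph_adj_add_one (π := π) (by omega) false (2 * k + 1)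
    refine .of_adj_of_adj le_rfl ?_ (cyclePermGraph_adj_add_one (by omega) false _) hnext.symm
      (heven k (by omega)) ?_
    · simpa using fun h => h2 (by push_cast; linear_combination -h)
    · simpa [mul_add, add_assoc, one_add_one_eq_two] using heven (k + 1) (by omega)
  rw [← ZMod.natCast_zmod_val i]
  obtain ⟨k, hk | hk⟩ := Nat.even_or_odd' i.val
  · simpa [hk] using heven k (by have := ZMod.val_lt i; omega)
  · simpa [hk] using hodd k (by have := ZMod.val_lt i; omega)

theorem activated_cyclePermSeed (hn : 2 < n) (v : Bool × ZMod n) :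
    Activated (cyclePermGraph n π) (fun _ => 2) ↑(cyclePermSeed n π) v := by
  obtain ⟨_ | _, i⟩ := v
  · exact activated_cyclePermSeed_false hn i
  · exact Activated.cyclePermGraph_true_of_false (by omega) (activated_cyclePermSeed_false hn)
      (.base (mem_insert_self _ _)) i

theorem le_card_of_activated_cyclePermGraph (hn : 2 < n) {S : Finset (Bool × ZMod n)}
    (hS : ∀ v, Activated (cyclePermGraph n π) (fun _ => 2) ↑S v) : (n + 2) / 2 ≤ #S := by
  have hV : Fintype.card (Bool × ZMod n) = 2 * n := by simp [ZMod.card, two_mul]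
  by_cases hSu : S = univ
  · rw [hSu, card_univ, hV]
    omega
  have hlt := sum_lt_card_edgeFinset hS (fun v _ => by rw [cyclePermGraph_degree hn]; norm_num)
    hSu
  rw [sum_const, smul_eq_mul, card_compl, hV, card_edgeFinset_cyclePermGraph hn] at hlt
  have := card_le_univ S
  omega

end CyclePermGraph

/-- For any permutation `π` and `n ≥ 4`, `min-seed(P_π(C_n), 2) = ⌈(n+1)/2⌉`. -/
theorem minSeed_cyclePermGraph (n : ℕ) [NeZero n] (hn : 4 ≤ n)
    (π : Equiv.Perm (ZMod n)) :
    minSeed (cyclePermGraph n π) (fun _ => 2) = (n + 2) / 2 := by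
  refine le_antisymm ?_
    (le_minSeed fun S hS => le_card_of_activated_cyclePermGraph (by omega) hS)
  calc minSeed (cyclePermGraph n π) (fun _ => 2) ≤ #(cyclePermSeed n π) :=
        minSeed_le (activated_cyclePermSeed (by omega))
    _ = (n + 2) / 2 := by rw [card_cyclePermSeed]; omega
end

section
/- For the n-path P_n with constant threshold 2, there is a minimum target set S activating all of P_n with |S| = ⌈(n+1)/2⌉ which contains both endpoints of the path. -/
/-- The `n`-path with vertices `x_1, …, x_n` (as `Fin n`) and edges `x_i x_{i+1}`. -/
def pathGraph (n : ℕ) : SimpleGraph (Fin n) :=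
  SimpleGraph.fromRel (fun a b => (b : ℕ) = (a : ℕ) + 1)


/-!
An endpoint of the path has a single neighbour, and each vertex of a pair of adjacent vertices has
at most one neighbour outside the pair; with threshold 2 such vertices can only be active if they
are seeded. So every target set contains both endpoints and meets every edge, which forces
`2 |S| ≥ n + 1`. Conversely, the even-indexed vertices together with the last vertex form a
target set of size `⌈(n + 1) / 2⌉`: every other vertex is interior and odd, so both its
neighbours are seeded.
-/

open Finset

section Activation

variable {V : Type*} {G : SimpleGraph V}

theorem Activated.notMem_of_disjoint {θ : V → ℕ} {S B : Set V} (hSB : Disjoint S B)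
    (hB : ∀ w ∈ B, ∀ T : Finset V, (∀ u ∈ T, G.Adj u w ∧ u ∉ B) → #T < θ w)
    {v : V} (hv : Activated G θ S v) : v ∉ B := by
  induction hv with
  | base hv => exact Set.disjoint_left.mp hSB hv
  | step T hadj hcard _ ih =>
    exact fun hw => (hB _ hw T fun u hu => ⟨hadj u hu, ih u hu⟩).not_ge hcard

theorem Activated.of_adj_of_adj_s4 {S : Set V} {u u' v : V} (hne : u ≠ u') (hu : G.Adj u v)
    (hu' : G.Adj u' v) (hSu : Activated G (fun _ => 2) S u) (hSu' : Activated G (fun _ => 2) S u') :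
    Activated G (fun _ => 2) S v := by
  classical
  exact .step {u, u'} (by simp [hu, hu']) (card_pair hne).ge (by simp [hSu, hSu'])

theorem nonempty_inter_of_forall_activated {S B : Set V}
    (hS : ∀ v, Activated G (fun _ => 2) S v) (hB : B.Nonempty)
    (hB' : ∀ w ∈ B, ∀ u u', G.Adj u w → G.Adj u' w → u ∉ B → u' ∉ B → u = u') :
    (S ∩ B).Nonempty := by
  by_contra hSB
  obtain ⟨v, hv⟩ := hB
  refine Activated.notMem_of_disjoint
    (Set.disjoint_iff_inter_eq_empty.mpr (Set.not_nonempty_iff_eq_empty.mp hSB))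
    (fun w hw T hT => ?_) (hS v) hv
  exact Nat.lt_succ_of_le <| card_le_one.mpr fun u hu u' hu' =>
    hB' w hw u u' (hT u hu).1 (hT u' hu').1 (hT u hu).2 (hT u' hu').2

end Activation

theorem add_one_le_two_mul_card_of_forall_mem_or {n : ℕ} {s : Finset ℕ} (h0 : 0 ∈ s)
    (hlast : n - 1 ∈ s)
    (hedge : ∀ i, i + 1 < n → i ∈ s ∨ i + 1 ∈ s) : n + 1 ≤ 2 * #s := by
  have hcover : range n ⊆ s ∪ (s.erase 0).image (· - 1) := by
    intro j hjn
    rw [mem_range] at hjn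
    by_cases hjs : j ∈ s
    · exact mem_union_left _ hjs
    · have hjlast : j ≠ n - 1 := fun h => hjs (h ▸ hlast)
      have hj1 : j + 1 ∈ s := (hedge j (by omega)).resolve_left hjs
      exact mem_union_right _ (mem_image.mpr ⟨j + 1, mem_erase.mpr ⟨by omega, hj1⟩, rfl⟩)
  have hs : 1 ≤ #s := card_pos.mpr ⟨0, h0⟩
  have : n ≤ #s + (#s - 1) := calc
    n = #(range n) := (card_range n).symm
    _ ≤ #(s ∪ (s.erase 0).image (· - 1)) := card_le_card hcover
    _ ≤ #s + #(s.erase 0) := (card_union_le _ _).trans (Nat.add_le_add_left card_image_le _)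
    _ = #s + (#s - 1) := by rw [card_erase_of_mem h0]
  omega

theorem card_filter_mod_two_eq_zero_range (m : ℕ) :
    #{v ∈ range m | v % 2 = 0} = (m + 1) / 2 := by
  induction m with
  | zero => rfl
  | succ m ih =>
    rw [range_add_one, filter_insert]
    split_ifs
    · rw [card_insert_of_notMem (by simp), ih]
      omega
    · rw [ih]
      omega

section PathGraph

variable {n : ℕ}

theorem pathGraph_adj_iff {a b : Fin n} :
    (pathGraph n).Adj a b ↔ (b : ℕ) = a + 1 ∨ (a : ℕ) = b + 1 := by
  rw [pathGraph, SimpleGraph.fromRel_adj, ne_eq, Fin.ext_iff]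
  omega

/-- `hend` rules out exactly the intervals consisting of one interior vertex, whose two outside
neighbours can activate it. -/
theorem pathGraph_exists_mem_Icc_of_activated {T : Finset (Fin n)}
    (hT : ∀ v, Activated (pathGraph n) (fun _ => 2) ↑T v) {a b : ℕ} (hab : a ≤ b)
    (hb : b < n) (hend : a = 0 ∨ b = n - 1 ∨ a < b) : ∃ v ∈ T, a ≤ (v : ℕ) ∧ (v : ℕ) ≤ b :=
  nonempty_inter_of_forall_activated (B := {v : Fin n | a ≤ v ∧ v ≤ b}) hT
    ⟨⟨a, by omega⟩, le_rfl, hab⟩ fun w hw u u' hu hu' huB hu'B => by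
      simp only [Set.mem_ofPred_eq, not_and_or, not_le] at hw huB hu'B
      rw [pathGraph_adj_iff] at hu hu'
      exact Fin.ext (by omega)

theorem pathGraph_add_one_le_two_mul_card (hn : 1 ≤ n) {T : Finset (Fin n)}
    (hT : ∀ v, Activated (pathGraph n) (fun _ => 2) ↑T v) : n + 1 ≤ 2 * #T := by
  have hval : ∀ v ∈ T, (v : ℕ) ∈ T.map Fin.valEmbedding := fun v hv => mem_map_of_mem _ hv
  rw [← card_map Fin.valEmbedding]
  refine add_one_le_two_mul_card_of_forall_mem_or ?_ ?_ fun i hi => ?_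
  · obtain ⟨v, hv, -, hv0⟩ := pathGraph_exists_mem_Icc_of_activated hT le_rfl hn (Or.inl rfl)
    simpa [Nat.le_zero.mp hv0] using hval v hv
  · obtain ⟨v, hv, hv1, -⟩ :=
      pathGraph_exists_mem_Icc_of_activated hT le_rfl (by omega) (Or.inr (Or.inl rfl))
    simpa [show (v : ℕ) = n - 1 by omega] using hval v hv
  · obtain ⟨v, hv, hiv, hvi⟩ :=
      pathGraph_exists_mem_Icc_of_activated hT (Nat.le_succ i) hi (Or.inr (Or.inr i.lt_succ_self))
    rcases show (v : ℕ) = i ∨ (v : ℕ) = i + 1 by omega with h | h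
    · exact .inl (h ▸ hval v hv)
    · exact .inr (h ▸ hval v hv)

def pathTargetSet (n : ℕ) : Finset (Fin n) := {v | (v : ℕ) % 2 = 0 ∨ (v : ℕ) = n - 1}

theorem activated_pathTargetSet (v : Fin n) :
    Activated (pathGraph n) (fun _ => 2) ↑(pathTargetSet n) v := by
  by_cases hv : v ∈ pathTargetSet n
  · exact Activated.base hv
  simp only [pathTargetSet, mem_filter, mem_univ, true_and, not_or] at hv
  have := v.isLt
  refine Activated.of_adj_of_adj_s4 (u := ⟨v - 1, by omega⟩) (u' := ⟨v + 1, by omega⟩)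
    (by simp [Fin.ext_iff]) ?_ ?_ (.base ?_) (.base ?_)
  all_goals simp [pathGraph_adj_iff, pathTargetSet] <;> omega

theorem card_pathTargetSet (hn : 1 ≤ n) : #(pathTargetSet n) = (n + 2) / 2 := by
  obtain ⟨m, rfl⟩ : ∃ m, n = m + 1 := ⟨n - 1, by omega⟩
  have hval :
      (pathTargetSet (m + 1)).map Fin.valEmbedding = insert m {v ∈ range m | v % 2 = 0} := by
    ext k
    simp only [pathTargetSet, mem_map, mem_filter, mem_univ, true_and, Fin.valEmbedding_apply,
      mem_insert, mem_range, add_tsub_cancel_right]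
    constructor
    · rintro ⟨v, hv, rfl⟩
      have := v.isLt
      omega
    · intro hk
      exact ⟨⟨k, by omega⟩, by simp only; omega, rfl⟩
  rw [← card_map Fin.valEmbedding, hval, card_insert_of_notMem (by simp),
    card_filter_mod_two_eq_zero_range]
  omega

end PathGraph

/-- For the `n`-path with constant threshold `2`, there is a minimum target set of size
`⌈(n+1)/2⌉` activating all of `P_n` and containing both endpoints of the path. -/
theorem pathGraph_min_target_set (n : ℕ) (hn : 1 ≤ n) :
    ∃ S : Finset (Fin n),
      S.card = (n + 2) / 2 ∧
      (∀ v, Activated (pathGraph n) (fun _ => 2) (↑S) v) ∧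
      (∀ T : Finset (Fin n), (∀ v, Activated (pathGraph n) (fun _ => 2) (↑T) v) →
        S.card ≤ T.card) ∧
      (⟨0, by omega⟩ : Fin n) ∈ S ∧ (⟨n - 1, by omega⟩ : Fin n) ∈ S := by
  refine ⟨pathTargetSet n, card_pathTargetSet hn, activated_pathTargetSet, fun T hT => ?_,
    by simp [pathTargetSet], by simp [pathTargetSet]⟩
  have := pathGraph_add_one_le_two_mul_card hn hT
  rw [card_pathTargetSet hn]
  omega
end

section
/- For m ≥ 3 and 1 ≤ s ≤ ⌊(m−1)/2⌋, the minimum size of a target set activating all vertices of the generalized Petersen graph P(m,s) under constant threshold 2 equals ⌈(m+1)/2⌉. -/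
/-- The generalized Petersen graph `P(m,s)`: outer cycle vertices `v_i = (false, i)`,
inner vertices `u_i = (true, i)`, edges `v_i v_{i+1}`, `u_i v_i`, `u_i u_{i+s}`
(indices mod `m`). -/
def genPetersen (m s : ℕ) [NeZero m] : SimpleGraph (Bool × ZMod m) :=
  SimpleGraph.fromRel (fun a b =>
    (a.1 = false ∧ b.1 = false ∧ b.2 = a.2 + 1) ∨
    (a.1 = true ∧ b.1 = false ∧ b.2 = a.2) ∨
    (a.1 = true ∧ b.1 = true ∧ b.2 = a.2 + (s : ZMod m)))

open Finset

def ActivatedWithin {V : Type*} (G : SimpleGraph V) (θ : V → ℕ) (S : Set V) :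
    ℕ → V → Prop
  | 0, v => v ∈ S
  | n + 1, v => ActivatedWithin G θ S n v ∨ ∃ T : Finset V,
      (∀ u ∈ T, G.Adj u v) ∧ θ v ≤ #T ∧ ∀ u ∈ T, ActivatedWithin G θ S n u

section

variable {V : Type*} {G : SimpleGraph V} {θ : V → ℕ} {S : Set V}

theorem ActivatedWithin.mono {n n' : ℕ} {v : V} (h : ActivatedWithin G θ S n v)
    (hn : n ≤ n') : ActivatedWithin G θ S n' v := by
  induction n', hn using Nat.le_induction with
  | base => exact h
  | succ k _ ih => exact .inl ih

namespace Activated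

theorem of_adj_of_adj_s5 {a b v : V} (hθ : θ v ≤ 2) (hab : a ≠ b) (ha : G.Adj a v)
    (hb : G.Adj b v) (haS : Activated G θ S a) (hbS : Activated G θ S b) :
    Activated G θ S v := by
  classical
  refine .step {a, b} ?_ (by rwa [card_pair hab]) ?_ <;> simp [ha, hb, haS, hbS]

theorem exists_activatedWithin {v : V} (h : Activated G θ S v) :
    ∃ n, ActivatedWithin G θ S n v := by
  induction h with
  | base hv => exact ⟨0, hv⟩
  | step T hadj hcard _ ih =>
    choose n hn using ih
    refine ⟨T.attach.sup (fun u => n u.1 u.2) + 1, .inr ⟨T, hadj, hcard, fun u hu => ?_⟩⟩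
    exact (hn u hu).mono (le_sup (f := fun u : T => n u.1 u.2) (mem_attach T ⟨u, hu⟩))

theorem exists_rank (h : ∀ v, Activated G θ S v) :
    ∃ r : V → ℕ, ∀ v ∉ S, ∃ T : Finset V,
      (∀ u ∈ T, G.Adj u v) ∧ #T = θ v ∧ ∀ u ∈ T, r u < r v := by
  classical
  have hex (v : V) : ∃ n, ActivatedWithin G θ S n v := (h v).exists_activatedWithin
  refine ⟨fun v => Nat.find (hex v), fun v hv => ?_⟩
  obtain ⟨n, hn⟩ : ∃ n, Nat.find (hex v) = n + 1 :=
    Nat.exists_eq_succ_of_ne_zero fun h0 =>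
      hv (by simpa [h0, ActivatedWithin] using Nat.find_spec (hex v))
  have hv' := Nat.find_spec (hex v)
  rw [hn] at hv'
  rcases hv' with hprev | ⟨T, hadj, hcard, hact⟩
  · have := Nat.find_min' (hex v) hprev
    omega
  · obtain ⟨T', hT', hcard'⟩ := exists_subset_card_eq hcard
    refine ⟨T', fun u hu => hadj u (hT' hu), hcard', fun u hu => ?_⟩
    show Nat.find (hex u) < Nat.find (hex v)
    have := Nat.find_min' (hex u) (hact u (hT' hu))
    omega

theorem sum_threshold_lt_card_edgeFinset [Fintype V] [DecidableEq V] [DecidableRel G.Adj]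
    {S : Finset V} (h : ∀ v, Activated G θ S v) (hθ : ∀ v ∉ S, θ v < G.degree v)
    (hS : (univ \ S).Nonempty) : ∑ v ∈ univ \ S, θ v < #G.edgeFinset := by
  obtain ⟨r, hr⟩ := exists_rank h
  choose! T hTadj hTcard hTlt using hr
  set A := univ \ S
  have hA {v : V} (hv : v ∈ A) : v ∉ S := (mem_sdiff.1 hv).2
  obtain ⟨w, hwA, hwmax⟩ := exists_max_image A r hS
  obtain ⟨x, hx, hxT⟩ : ∃ x ∈ G.neighborFinset w, x ∉ T w :=
    exists_mem_notMem_of_card_lt_card ((hTcard w (hA hwA)).trans_lt (hθ w (hA hwA)))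
  rw [SimpleGraph.mem_neighborFinset] at hx
  let f : (Σ _ : V, V) → Sym2 V := fun p => s(p.2, p.1)
  have hmaps : Set.MapsTo f (A.sigma T) (G.edgeFinset.erase s(x, w)) := by
    rintro ⟨v, u⟩ huv
    simp only [coe_sigma, Set.mem_sigma_iff, mem_coe] at huv
    obtain ⟨hv, hu⟩ := huv
    simp only [f, coe_erase, Set.mem_sdiff, mem_coe, SimpleGraph.mem_edgeFinset,
      SimpleGraph.mem_edgeSet, Set.mem_singleton_iff, Sym2.eq_iff]
    refine ⟨hTadj v (hA hv) u hu, ?_⟩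
    rintro (⟨rfl, rfl⟩ | ⟨rfl, rfl⟩)
    · exact hxT hu
    · exact absurd (hwmax _ hv) (not_le.2 (hTlt _ (hA hv) _ hu))
  have hinj : Set.InjOn f (A.sigma T) := by
    rintro ⟨v, u⟩ huv ⟨v', u'⟩ huv' heq
    simp only [coe_sigma, Set.mem_sigma_iff, mem_coe] at huv huv'
    simp only [f, Sym2.eq_iff] at heq
    rcases heq with ⟨rfl, rfl⟩ | ⟨rfl, rfl⟩
    · rfl
    · have := hTlt _ (hA huv.1) _ huv.2
      have := hTlt _ (hA huv'.1) _ huv'.2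
      omega
  calc ∑ v ∈ A, θ v = #(A.sigma T) := by
        rw [card_sigma]
        exact sum_congr rfl fun v hv => (hTcard v (hA hv)).symm
    _ ≤ #(G.edgeFinset.erase s(x, w)) := card_le_card_of_injOn f hmaps hinj
    _ < #G.edgeFinset := card_erase_lt_of_mem (by simpa using hx.symm)

end Activated

end

theorem SimpleGraph.IsRegularOfDegree.card_lt_four_mul_card_of_activated {V : Type*}
    [Fintype V] [Nonempty V] [DecidableEq V] {G : SimpleGraph V} [DecidableRel G.Adj]
    (hG : G.IsRegularOfDegree 3) {S : Finset V} (h : ∀ v, Activated G (fun _ => 2) S v) :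
    Fintype.card V < 4 * #S := by
  have hSV : #S ≤ Fintype.card V := card_le_univ S
  rcases (univ \ S).eq_empty_or_nonempty with hS | hS
  · have : #S = Fintype.card V := by
      rw [← card_univ, sdiff_eq_empty_iff_subset.1 hS |>.antisymm (subset_univ S)]
    have := Fintype.card_pos (α := V)
    omega
  · have hlt := Activated.sum_threshold_lt_card_edgeFinset h (by simp [hG.degree_eq]) hS
    have hsum := G.sum_degrees_eq_twice_card_edges
    simp only [hG.degree_eq, sum_const, card_univ, smul_eq_mul,
      card_sdiff_of_subset (subset_univ S)] at hlt hsum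
    omega

theorem minSeed_eq {V : Type*} [Fintype V] {G : SimpleGraph V} {θ : V → ℕ} {n : ℕ}
    (hex : ∃ S : Finset V, #S = n ∧ ∀ v, Activated G θ S v)
    (hle : ∀ S : Finset V, (∀ v, Activated G θ S v) → n ≤ #S) : minSeed G θ = n :=
  IsLeast.csInf_eq ⟨hex, by rintro _ ⟨S, rfl, hS⟩; exact hle S hS⟩

theorem ZMod.natCast_ne_zero_of_pos_of_lt {m a : ℕ} (ha : 0 < a) (h : a < m) :
    (a : ZMod m) ≠ 0 := by
  rw [Ne, ZMod.natCast_eq_zero_iff]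
  exact Nat.not_dvd_of_pos_of_lt ha h

theorem ZMod.natCast_gcd_mem_zmultiples (m s : ℕ) :
    ((m.gcd s : ℕ) : ZMod m) ∈ AddSubgroup.zmultiples (s : ZMod m) := by
  refine ⟨Nat.gcdB m s, ?_⟩
  have h := congrArg (Int.cast : ℤ → ZMod m) (Nat.gcd_eq_gcd_ab m s)
  push_cast at h
  simp [h, mul_comm]

theorem ZMod.sub_natCast_val_mod_gcd_mem_zmultiples (m s : ℕ) [NeZero m] (z : ZMod m) :
    z - ((z.val % m.gcd s : ℕ) : ZMod m) ∈ AddSubgroup.zmultiples (s : ZMod m) := by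
  have hz : z - ((z.val % m.gcd s : ℕ) : ZMod m) = (z.val / m.gcd s) • (m.gcd s : ZMod m) := by
    have h : ((m.gcd s * (z.val / m.gcd s) + z.val % m.gcd s : ℕ) : ZMod m) = z := by
      rw [Nat.div_add_mod, ZMod.natCast_zmod_val]
    push_cast at h
    rw [nsmul_eq_mul]
    linear_combination -h
  rw [hz]
  exact AddSubgroup.nsmul_mem _ (ZMod.natCast_gcd_mem_zmultiples m s) _

theorem ZMod.val_mod_eq_of_sub_mem_zmultiples {m d s : ℕ} [NeZero m] (hdm : d ∣ m)
    (hds : d ∣ s) {w σ : ZMod m} (h : w - σ ∈ AddSubgroup.zmultiples (s : ZMod m)) :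
    w.val % d = σ.val % d := by
  obtain ⟨k, hk⟩ := h
  have hcast := congrArg (ZMod.castHom hdm (ZMod d)) hk
  rw [map_zsmul, map_natCast, (ZMod.natCast_eq_zero_iff s d).2 hds, smul_zero, map_sub,
    eq_comm, sub_eq_zero, ZMod.castHom_apply, ZMod.castHom_apply, ZMod.cast_eq_val,
    ZMod.cast_eq_val] at hcast
  exact (ZMod.natCast_eq_natCast_iff' _ _ _).1 hcast

section Propagation

open AddSubgroup

variable {G : Type*} [AddCommGroup G] {P : G → Prop} {g σ : G} {B : Set G}

theorem apply_add_nsmul_of_propagate (hσ : P σ)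
    (hstep : ∀ z, z - σ ∈ zmultiples g → z ∉ B → P (z - g) → P z) (k : ℕ)
    (hB : ∀ j ≤ k, σ + j • g ∈ B → P (σ + j • g)) : P (σ + k • g) := by
  induction k with
  | zero => simpa using hσ
  | succ k ih =>
    by_cases hkB : σ + (k + 1) • g ∈ B
    · exact hB _ le_rfl hkB
    refine hstep _ (by simp) hkB ?_
    rw [succ_nsmul, ← add_assoc, add_sub_cancel_right]
    exact ih fun j hj => hB j (by omega)

theorem apply_sub_of_mem_of_propagate [Finite G] (hσ : P σ)
    (hstep : ∀ z, z - σ ∈ zmultiples g → z ∉ B → P (z - g) → P z) (hB : B.Subsingleton)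
    {b : G} (hb : b ∈ B) (hbσ : b ≠ σ) (horb : b - σ ∈ zmultiples g) : P (b - g) := by
  classical
  have hex : ∃ n : ℕ, σ + n • g = b := by
    obtain ⟨n, hn⟩ := (AddSubmonoid.mem_multiples_iff _ _).1
      (mem_multiples_iff_mem_zmultiples.2 horb)
    exact ⟨n, by rw [hn, add_sub_cancel]⟩
  obtain ⟨k, hk⟩ : ∃ k, Nat.find hex = k + 1 :=
    Nat.exists_eq_succ_of_ne_zero fun h0 => hbσ (by simpa [h0] using (Nat.find_spec hex).symm)
  have hbk : b - g = σ + k • g := by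
    rw [← Nat.find_spec hex, hk, succ_nsmul, ← add_assoc, add_sub_cancel_right]
  rw [hbk]
  refine apply_add_nsmul_of_propagate hσ hstep k fun j hj hjB => ?_
  exact absurd (hB hjB hb) (Nat.find_min hex (by omega))

/-- A blocked point `b` of the cycle is reached from `σ` both forwards, at `b - g`, and
backwards, at `b + g`. -/
theorem forall_sub_mem_zmultiples_of_propagate [Finite G] (hσ : P σ) (hB : B.Subsingleton)
    (hstep : ∀ z, z - σ ∈ zmultiples g → z ∉ B → P (z - g) ∨ P (z + g) → P z)
    (hboth : ∀ z, P (z - g) → P (z + g) → P z) (z : G) (hz : z - σ ∈ zmultiples g) :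
    P z := by
  have hfwd : ∀ z, z - σ ∈ zmultiples g → z ∉ B → P (z - g) → P z :=
    fun z hz hzB h => hstep z hz hzB (.inl h)
  have hbwd : ∀ z, z - σ ∈ zmultiples (-g) → z ∉ B → P (z - -g) → P z :=
    fun z hz hzB h =>
      hstep z (by rwa [zmultiples_neg] at hz) hzB (.inr (by rwa [sub_neg_eq_add] at h))
  have hPB : ∀ b ∈ B, b - σ ∈ zmultiples g → P b := by
    intro b hb horb
    rcases eq_or_ne b σ with rfl | hbσ
    · exact hσ
    refine hboth b (apply_sub_of_mem_of_propagate hσ hfwd hB hb hbσ horb) ?_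
    simpa using apply_sub_of_mem_of_propagate hσ hbwd hB hb hbσ (by rwa [zmultiples_neg])
  obtain ⟨n, hn⟩ :=
    (AddSubmonoid.mem_multiples_iff _ _).1 (mem_multiples_iff_mem_zmultiples.2 hz)
  rw [← add_sub_cancel σ z, ← hn]
  refine apply_add_nsmul_of_propagate hσ hfwd n fun j _ hjB => hPB _ hjB ?_
  simp

end Propagation

namespace GenPetersen

variable {m s : ℕ} [NeZero m]

instance : DecidableRel (genPetersen m s).Adj :=
  inferInstanceAs (DecidableRel (SimpleGraph.fromRel _).Adj)

theorem adj_outer_succ (h1 : (1 : ZMod m) ≠ 0) (i : ZMod m) :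
    (genPetersen m s).Adj (false, i) (false, i + 1) := by
  simp [genPetersen, h1]

theorem adj_inner_outer (i : ZMod m) : (genPetersen m s).Adj (true, i) (false, i) := by
  simp [genPetersen]

theorem adj_inner_add (hs : (s : ZMod m) ≠ 0) (i : ZMod m) :
    (genPetersen m s).Adj (true, i) (true, i + s) := by
  simp [genPetersen, hs]

theorem neighborFinset_outer (h1 : (1 : ZMod m) ≠ 0) (i : ZMod m) :
    (genPetersen m s).neighborFinset (false, i) = {(false, i + 1), (false, i - 1), (true, i)} := by
  ext ⟨_ | _, j⟩ <;> simp only [SimpleGraph.mem_neighborFinset] <;> simp [genPetersen] <;> grind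

theorem neighborFinset_inner (hs : (s : ZMod m) ≠ 0) (i : ZMod m) :
    (genPetersen m s).neighborFinset (true, i) = {(true, i + s), (true, i - s), (false, i)} := by
  ext ⟨_ | _, j⟩ <;> simp only [SimpleGraph.mem_neighborFinset] <;> simp [genPetersen]
  grind

theorem isRegularOfDegree_three (hm : 3 ≤ m) (hs : 0 < s) (h2s : 2 * s < m) :
    (genPetersen m s).IsRegularOfDegree 3 := by
  have h1 : ((1 : ℕ) : ZMod m) ≠ 0 := ZMod.natCast_ne_zero_of_pos_of_lt one_pos (by omega)
  have h2 : ((2 : ℕ) : ZMod m) ≠ 0 := ZMod.natCast_ne_zero_of_pos_of_lt two_pos (by omega)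
  have hs' : (s : ZMod m) ≠ 0 := ZMod.natCast_ne_zero_of_pos_of_lt hs (by omega)
  have h2s' : ((2 * s : ℕ) : ZMod m) ≠ 0 := ZMod.natCast_ne_zero_of_pos_of_lt (by omega) h2s
  push_cast at h1 h2 h2s'
  rintro ⟨_ | _, i⟩ <;> rw [SimpleGraph.degree, card_eq_three]
  · refine ⟨_, _, _, ?_, by simp, by simp, neighborFinset_outer h1 i⟩
    simp only [ne_eq, Prod.mk.injEq, true_and]
    exact fun h => h2 (by linear_combination h)
  · refine ⟨_, _, _, ?_, by simp, by simp, neighborFinset_inner hs' i⟩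
    simp only [ne_eq, Prod.mk.injEq, true_and]
    exact fun h => h2s' (by linear_combination h)

def targetSet (m d : ℕ) [NeZero m] : Finset (Bool × ZMod m) :=
  (range d).image (fun i : ℕ => (true, (i : ZMod m))) ∪
    (range (m / 2 + 1 - d)).image (fun j : ℕ => (false, ((d + 2 * j : ℕ) : ZMod m)))

theorem card_targetSet {d : ℕ} (hd0 : 0 < d) (hd : d ≤ m / 2) :
    #(targetSet m d) = m / 2 + 1 := by
  have hinj {a b : ℕ} (ha : a < m) (hb : b < m) (h : (a : ZMod m) = b) : a = b := by
    simpa [ZMod.val_cast_of_lt ha, ZMod.val_cast_of_lt hb] using congrArg ZMod.val h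
  rw [targetSet, card_union_of_disjoint, card_image_of_injOn, card_image_of_injOn, card_range,
    card_range]
  · omega
  · intro j hj j' hj' h
    simp only [coe_range, Set.mem_Iio, Prod.mk.injEq, true_and] at hj hj' h
    have := hinj (by omega) (by omega) h
    omega
  · intro i hi i' hi' h
    simp only [coe_range, Set.mem_Iio, Prod.mk.injEq, true_and] at hi hi' h
    exact hinj (by omega) (by omega) h
  · simp [disjoint_left]

theorem activated_outer_of_le {d : ℕ} (hm : 3 ≤ m) (hd : d ≤ m / 2) {k : ℕ}
    (hk : k ≤ d + 2 * (m / 2 - d)) :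
    Activated (genPetersen m s) (fun _ => 2) (targetSet m d) (false, (k : ZMod m)) := by
  have h1 : ((1 : ℕ) : ZMod m) ≠ 0 := ZMod.natCast_ne_zero_of_pos_of_lt one_pos (by omega)
  have h2 : ((2 : ℕ) : ZMod m) ≠ 0 := ZMod.natCast_ne_zero_of_pos_of_lt two_pos (by omega)
  push_cast at h1 h2
  have hadj (k : ℕ) :
      (genPetersen m s).Adj (false, (k : ZMod m)) (false, ((k + 1 : ℕ) : ZMod m)) := by
    simpa using adj_outer_succ h1 (k : ZMod m)
  have hinner {i : ℕ} (hi : i < d) :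
      Activated (genPetersen m s) (fun _ => 2) (targetSet m d) (true, (i : ZMod m)) :=
    .base (by simp only [targetSet, coe_union, coe_image, coe_range]; left; exact ⟨i, hi, rfl⟩)
  have houter {j : ℕ} (hj : j ≤ m / 2 - d) :
      Activated (genPetersen m s) (fun _ => 2) (targetSet m d)
        (false, ((d + 2 * j : ℕ) : ZMod m)) := by
    refine .base ?_
    simp only [targetSet, coe_union, coe_image, coe_range]
    exact .inr ⟨j, by simp; omega, rfl⟩
  rcases le_or_gt k d with hkd | hkd
  · refine Nat.decreasingInduction (motive := fun k _ => Activated _ _ _ (false, (k : ZMod m)))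
      (fun i hi ih => ?_) (by simpa using houter (j := 0) (Nat.zero_le _)) hkd
    exact .of_adj_of_adj le_rfl (by simp) (hadj i).symm (adj_inner_outer _) ih (hinner hi)
  · obtain ⟨j, rfl | rfl⟩ : ∃ j, k = d + 2 * j ∨ k = d + 2 * j + 1 :=
      ⟨(k - d) / 2, by omega⟩
    · exact houter (by omega)
    refine .of_adj_of_adj le_rfl ?_ (hadj _) ?_ (houter (j := j) (by omega))
      (houter (j := j + 1) (by omega))
    · simp only [ne_eq, Prod.mk.injEq, true_and]
      push_cast
      exact fun h => h2 (by linear_combination -h)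
    · convert (hadj (d + 2 * j + 1)).symm using 3
      omega

theorem activated_outer_of_activated_inner (hm : 2 ≤ m) {S : Set (Bool × ZMod m)}
    (hinner : ∀ z, Activated (genPetersen m s) (fun _ => 2) S (true, z))
    (h0 : Activated (genPetersen m s) (fun _ => 2) S (false, 0)) (z : ZMod m) :
    Activated (genPetersen m s) (fun _ => 2) S (false, z) := by
  have h1 : ((1 : ℕ) : ZMod m) ≠ 0 := ZMod.natCast_ne_zero_of_pos_of_lt one_pos (by omega)
  rw [Nat.cast_one] at h1
  suffices ∀ k : ℕ, Activated (genPetersen m s) (fun _ => 2) S (false, (k : ZMod m)) by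
    simpa using this z.val
  intro k
  induction k with
  | zero => simpa using h0
  | succ k ih =>
    push_cast
    exact .of_adj_of_adj le_rfl (by simp) (adj_outer_succ h1 _) (adj_inner_outer _) ih (hinner _)

/-- The inner vertices split into the `gcd m s` cycles `σ + ℤ s`, each containing exactly one
inner seed `u_σ`, `σ < gcd m s`. The outer vertices outside the initially active arc lie within
`gcd m s` consecutive positions, so each inner cycle meets them at most once and is activated
from its seed in both directions. -/
theorem activated_inner (hm : 3 ≤ m) (hs : 0 < s) (h2s : 2 * s < m) (z : ZMod m) :
    Activated (genPetersen m s) (fun _ => 2) (targetSet m (m.gcd s)) (true, z) := by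
  set d := m.gcd s
  have hdm : d ∣ m := Nat.gcd_dvd_left m s
  have hds : d ∣ s := Nat.gcd_dvd_right m s
  have hd0 : 0 < d := Nat.gcd_pos_of_pos_right m hs
  have hdle : d ≤ s := Nat.le_of_dvd hs hds
  have hs' : (s : ZMod m) ≠ 0 := ZMod.natCast_ne_zero_of_pos_of_lt hs (by omega)
  have h2s' : ((2 * s : ℕ) : ZMod m) ≠ 0 := ZMod.natCast_ne_zero_of_pos_of_lt (by omega) h2s
  push_cast at h2s'
  set σ : ZMod m := ((z.val % d : ℕ) : ZMod m)
  let B : Set (ZMod m) := {w | w - σ ∈ AddSubgroup.zmultiples (s : ZMod m) ∧ m - d ≤ w.val}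
  have hB : B.Subsingleton := by
    rintro x ⟨hx, hxd⟩ y ⟨hy, hyd⟩
    have hxy : x.val ≡ y.val [MOD d] :=
      (ZMod.val_mod_eq_of_sub_mem_zmultiples hdm hds hx).trans
        (ZMod.val_mod_eq_of_sub_mem_zmultiples hdm hds hy).symm
    have := x.val_lt
    have := y.val_lt
    exact ZMod.val_injective m (hxy.eq_of_abs_lt (abs_sub_lt_iff.2 ⟨by omega, by omega⟩))
  refine forall_sub_mem_zmultiples_of_propagate (P := fun w => Activated _ _ _ (true, w))
    (.base ?_) hB (fun w hw hwB hnbr => ?_) (fun w hprev hnext => ?_) z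
    (ZMod.sub_natCast_val_mod_gcd_mem_zmultiples m s z)
  · simp only [targetSet, coe_union, coe_image, coe_range]
    exact .inl ⟨z.val % d, Nat.mod_lt _ hd0, rfl⟩
  · have hwd : w.val < m - d := not_le.1 fun h => hwB ⟨hw, h⟩
    have hout : Activated (genPetersen m s) (fun _ => 2) (targetSet m d) (false, w) := by
      simpa using activated_outer_of_le (s := s) hm (by omega) (k := w.val) (by omega)
    rcases hnbr with hprev | hnext
    · refine .of_adj_of_adj le_rfl (by simp) ?_ (adj_inner_outer w).symm hprev hout
      simpa using adj_inner_add hs' (w - s)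
    · exact .of_adj_of_adj le_rfl (by simp) (adj_inner_add hs' w).symm (adj_inner_outer w).symm
        hnext hout
  · refine .of_adj_of_adj le_rfl ?_ ?_ (adj_inner_add hs' w).symm hprev hnext
    · simp only [ne_eq, Prod.mk.injEq, true_and]
      exact fun h => h2s' (by linear_combination -h)
    · simpa using adj_inner_add hs' (w - s)

theorem activated_targetSet (hm : 3 ≤ m) (hs : 0 < s) (h2s : 2 * s < m) (v : Bool × ZMod m) :
    Activated (genPetersen m s) (fun _ => 2) (targetSet m (m.gcd s)) v := by
  have hd : m.gcd s ≤ m / 2 := by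
    have := Nat.le_of_dvd hs (Nat.gcd_dvd_right m s)
    omega
  obtain ⟨_ | _, z⟩ := v
  · refine activated_outer_of_activated_inner (by omega) (activated_inner hm hs h2s) ?_ z
    simpa using activated_outer_of_le (s := s) hm hd (k := 0) (Nat.zero_le _)
  · exact activated_inner hm hs h2s z

end GenPetersen

open GenPetersen in
/-- For `m ≥ 3` and `1 ≤ s ≤ ⌊(m-1)/2⌋`, `min-seed(P(m,s), 2) = ⌈(m+1)/2⌉`. -/
theorem minSeed_genPetersen (m s : ℕ) [NeZero m] (hm : 3 ≤ m)
    (hs1 : 1 ≤ s) (hs2 : s ≤ (m - 1) / 2) :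
    minSeed (genPetersen m s) (fun _ => 2) = (m + 2) / 2 := by
  have h2s : 2 * s < m := by omega
  have hd0 : 0 < m.gcd s := Nat.gcd_pos_of_pos_right m hs1
  have hd : m.gcd s ≤ m / 2 := by
    have := Nat.le_of_dvd hs1 (Nat.gcd_dvd_right m s)
    omega
  refine minSeed_eq ⟨targetSet m (m.gcd s), ?_, activated_targetSet hm hs1 h2s⟩ fun S hS => ?_
  · rw [card_targetSet hd0 hd]
    omega
  · have := (isRegularOfDegree_three hm hs1 h2s).card_lt_four_mul_card_of_activated hS
    rw [Fintype.card_prod, Fintype.card_bool, ZMod.card] at this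
    omega
end

section
/- If m ≥ 5 is odd and s ≥ 2, then min-seed(C_m ⊘ C_{3s}, 3) = ms + 1. -/
/-- The torus cordalis `C_m ⊘ C_n` on vertices `(i,j)`, `i : ZMod m`, `j : Fin n`
(`j` playing the role of `1,…,n`): edges `(i,j)(i±1,j)`, `(i,j)(i,j+1)` for `j < n`,
and the shifted wrap-around edge `(i,n)(i+1,1)`. -/
def torusCordalis (m n : ℕ) [NeZero m] : SimpleGraph (ZMod m × Fin n) :=
  SimpleGraph.fromRel (fun a b =>
    (b.1 = a.1 + 1 ∧ b.2 = a.2) ∨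
    (a.1 = b.1 ∧ (b.2 : ℕ) = (a.2 : ℕ) + 1) ∨
    ((a.2 : ℕ) = n - 1 ∧ (b.2 : ℕ) = 0 ∧ b.1 = a.1 + 1))

/-!
Lower bound: with threshold `3` in a `4`-regular graph, every newly activated vertex has at
least three edges into the active set, so it raises the degree sum of the active set by at least
`6`, and the last vertex, all four of whose edges go back, raises it by `8`. Since the degree sum
of the whole graph is `4 |V|`, a percolating set `S` satisfies `6 (|V| - |S| - 1) + 8 ≤ 4 |V|`,
i.e. `3 |S| ≥ |V| + 1 = 3 m s + 1`.

Upper bound: seed row `r` at the columns `≡ 0, 1, 2 (mod 3)` according as `r = 0`, `r` is odd or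
`r ≥ 2` is even, and add the vertex `(0, 3s - 1)`; these are `m s + 1` vertices. A vertex of row
`r` between two rows with the same offset sees three seeds, so rows `1, …, m - 2` fill up in
residue `1` and rows `2, …, m - 1` in residue `2`. Starting at `(1, 0)`, which sees the extra
seed through the shifted wrap-around edge, each column `j ≡ 0` then fills up from row `1` to row
`m - 1`, which activates the rest of the block of columns `j, j + 1, j + 2` and then `(1, j + 3)`.
-/

open Finset

section Activation

variable {V : Type*} {G : SimpleGraph V} {θ : V → ℕ}

theorem Activated.mono {S T : Set V} (hST : S ⊆ T) {v : V} (hv : Activated G θ S v) :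
    Activated G θ T v := by
  induction hv with
  | base hv => exact .base (hST hv)
  | step U hadj hcard _ ih => exact .step U hadj hcard ih

theorem Activated.of_forall_neighbor_ne [DecidableEq V] {S : Set V} {v : V} (w : V)
    [Fintype (G.neighborSet v)] (hθ : θ v < G.degree v)
    (h : ∀ u ∈ G.neighborFinset v, u ≠ w → Activated G θ S u) : Activated G θ S v :=
  .step ((G.neighborFinset v).erase w)
    (fun _ hu => (G.mem_neighborFinset _ _ |>.1 (mem_of_mem_erase hu)).symm)
    (by have := pred_card_le_card_erase (s := G.neighborFinset v) (a := w)
        rw [G.card_neighborFinset_eq_degree] at this; omega)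
    (fun u hu => h u (mem_of_mem_erase hu) (ne_of_mem_erase hu))

variable [Fintype V] [DecidableEq V] [DecidableRel G.Adj]

theorem Activated.exists_threshold_le_card_inter {S : Set V} {A : Finset V} (hSA : S ⊆ A)
    (hA : A ≠ univ) (h : ∀ v, Activated G θ S v) :
    ∃ v ∉ A, θ v ≤ #(G.neighborFinset v ∩ A) := by
  by_contra! hcon
  have hclosed : ∀ v, Activated G θ A v → v ∈ A := by
    intro v hv
    induction hv with
    | base hv => exact hv
    | @step v U hadj hcard _ ih =>
      by_contra hvA
      have hUA : U ⊆ G.neighborFinset v ∩ A := fun u hu =>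
        mem_inter.2 ⟨(G.mem_neighborFinset _ _).2 (hadj u hu).symm, ih u hu⟩
      exact (hcon v hvA).not_ge (hcard.trans (card_le_card hUA))
  exact hA (eq_univ_of_forall fun v => hclosed v ((h v).mono hSA))

end Activation

namespace SimpleGraph

variable {V : Type*} [Fintype V] [DecidableEq V] (G : SimpleGraph V) [DecidableRel G.Adj]

/-- Twice the number of edges of the subgraph induced on `A`. -/
def degreeSumWithin (A : Finset V) : ℕ := ∑ u ∈ A, #(G.neighborFinset u ∩ A)

theorem degreeSumWithin_insert {A : Finset V} {v : V} (hv : v ∉ A) :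
    G.degreeSumWithin (insert v A) = G.degreeSumWithin A + 2 * #(G.neighborFinset v ∩ A) := by
  have hA : ∀ u ∈ A, #(G.neighborFinset u ∩ insert v A) =
      #(G.neighborFinset u ∩ A) + if G.Adj v u then 1 else 0 := by
    intro u _
    split_ifs with h
    · rw [inter_insert_of_mem ((G.mem_neighborFinset _ _).2 h.symm),
        card_insert_of_notMem fun h' => hv (mem_inter.1 h').2]
    · rw [inter_insert_of_notMem fun h' => h ((G.mem_neighborFinset _ _).1 h').symm, add_zero]
  have hcount : (∑ u ∈ A, if G.Adj v u then 1 else 0) = #(G.neighborFinset v ∩ A) := by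
    rw [sum_boole, Nat.cast_id, inter_comm, ← filter_mem_eq_inter]
    simp
  rw [degreeSumWithin, degreeSumWithin, sum_insert hv, sum_congr rfl hA, sum_add_distrib, hcount,
    inter_insert_of_notMem (G.notMem_neighborFinset_self v)]
  ring

theorem IsRegularOfDegree.degreeSumWithin_univ {d : ℕ} (hG : G.IsRegularOfDegree d) :
    G.degreeSumWithin univ = d * Fintype.card V := by
  simp [degreeSumWithin, inter_univ, card_neighborFinset_eq_degree, hG.degree_eq, mul_comm]

end SimpleGraph

namespace SimpleGraph.IsRegularOfDegree

variable {V : Type*} [Fintype V] [DecidableEq V] {G : SimpleGraph V} [DecidableRel G.Adj]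
  {d r : ℕ}

theorem degreeSumWithin_add_two_mul_card_compl_le (hG : G.IsRegularOfDegree d) {S : Set V}
    (hS : ∀ v, Activated G (fun _ => r) S v) {A : Finset V} (hSA : S ⊆ A) (hA : A ≠ univ) :
    G.degreeSumWithin A + 2 * r * #Aᶜ + 2 * d ≤ d * Fintype.card V + 2 * r := by
  obtain ⟨c, hc⟩ : ∃ c, #Aᶜ = c := ⟨_, rfl⟩
  induction c generalizing A with
  | zero => exact absurd (compl_eq_empty_iff _ |>.1 (card_eq_zero.1 hc)) hA
  | succ c ih =>
    obtain ⟨v, hvA, hv⟩ := Activated.exists_threshold_le_card_inter hSA hA hS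
    have hins := G.degreeSumWithin_insert hvA
    have hcompl : #(insert v A)ᶜ = c := by
      rw [compl_insert, card_erase_of_mem (mem_compl.2 hvA), hc, Nat.add_sub_cancel]
    rw [hc, mul_add, mul_one]
    by_cases hlast : insert v A = univ
    · have hnbrs : G.neighborFinset v ∩ A = G.neighborFinset v := by
        refine inter_eq_left.2 fun u hu => ?_
        have : u ∈ insert v A := hlast ▸ mem_univ u
        exact (mem_insert.1 this).resolve_left (G.ne_of_adj ((G.mem_neighborFinset _ _).1 hu)).symm
      rw [hnbrs, card_neighborFinset_eq_degree, hG.degree_eq, hlast,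
        hG.degreeSumWithin_univ] at hins
      rw [hlast, compl_univ, card_empty] at hcompl
      subst hcompl
      omega
    · have := ih (hSA.trans (coe_subset.2 (subset_insert v A))) hlast hcompl
      rw [hcompl] at this
      omega

theorem card_add_one_le_three_mul_card [Nonempty V] (hG : G.IsRegularOfDegree 4) {S : Finset V}
    (hS : ∀ v, Activated G (fun _ => 3) S v) : Fintype.card V + 1 ≤ 3 * #S := by
  by_cases hSV : S = univ
  · rw [hSV, card_univ]
    have := Fintype.card_pos (α := V)
    omega
  · have := hG.degreeSumWithin_add_two_mul_card_compl_le hS subset_rfl hSV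
    rw [card_compl] at this
    have := card_le_univ S
    omega

end SimpleGraph.IsRegularOfDegree

namespace TorusCordalis

section Neighbors

variable {m n : ℕ}

def up (v : ZMod m × Fin n) : ZMod m × Fin n := (v.1 + 1, v.2)

def down (v : ZMod m × Fin n) : ZMod m × Fin n := (v.1 - 1, v.2)

/-- The successor of `v` along the helix `(i, 0), …, (i, n - 1), (i + 1, 0), …`. -/
def right (v : ZMod m × Fin n) : ZMod m × Fin n :=
  if h : (v.2 : ℕ) + 1 < n then (v.1, ⟨v.2 + 1, h⟩) else (v.1 + 1, ⟨0, v.2.pos⟩)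

def left (v : ZMod m × Fin n) : ZMod m × Fin n :=
  if h : (v.2 : ℕ) = 0 then (v.1 - 1, ⟨n - 1, by have := v.2.pos; omega⟩)
  else (v.1, ⟨v.2 - 1, by omega⟩)

theorem up_eq_iff {u v : ZMod m × Fin n} : up u = v ↔ u = down v := by
  constructor <;> rintro rfl <;> simp [up, down]

theorem right_eq_iff {u v : ZMod m × Fin n} : right u = v ↔ u = left v := by
  obtain ⟨i, j⟩ := u
  obtain ⟨k, l⟩ := v
  have := j.isLt
  have := l.isLt
  unfold right left
  split_ifs <;> simp only [Prod.ext_iff, Fin.ext_iff] at * <;> grind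

theorem nodup_self_up_down_right_left (hm : 3 ≤ m) (hn : 2 ≤ n) (v : ZMod m × Fin n) :
    [v, up v, down v, right v, left v].Nodup := by
  have hne_one (a : ZMod m) : a ≠ a + 1 ∧ a ≠ a - 1 := by
    have : Fact (1 < m) := ⟨by omega⟩
    constructor <;> intro h <;> simpa using congrArg (· - a) h
  have hne_two (a : ZMod m) : a + 1 ≠ a - 1 := by
    intro h
    have h := (ZMod.natCast_eq_zero_iff 2 m).1 (by push_cast; linear_combination h)
    have := Nat.le_of_dvd two_pos h
    omega
  obtain ⟨i, j⟩ := v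
  have := j.isLt
  simp only [List.nodup_cons, List.mem_cons, List.not_mem_nil, or_false, List.nodup_nil,
    up, down, right, left]
  split_ifs <;> simp only [Prod.ext_iff, Fin.ext_iff] at * <;> grind

variable [NeZero m]

theorem adj_iff (hm : 3 ≤ m) (hn : 2 ≤ n) {u v : ZMod m × Fin n} :
    (torusCordalis m n).Adj u v ↔ v = up u ∨ v = down u ∨ v = right u ∨ v = left u := by
  have hrel (a b : ZMod m × Fin n) :
      ((b.1 = a.1 + 1 ∧ b.2 = a.2) ∨ (a.1 = b.1 ∧ (b.2 : ℕ) = (a.2 : ℕ) + 1) ∨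
        ((a.2 : ℕ) = n - 1 ∧ (b.2 : ℕ) = 0 ∧ b.1 = a.1 + 1)) ↔
        b = up a ∨ b = right a := by
    obtain ⟨i, j⟩ := a
    obtain ⟨k, l⟩ := b
    have := j.isLt
    unfold up right
    split_ifs <;> simp only [Prod.ext_iff, Fin.ext_iff] at * <;> grind
  have hne := nodup_self_up_down_right_left hm hn u
  simp only [List.nodup_cons, List.mem_cons, List.not_mem_nil, or_false] at hne
  rw [torusCordalis, SimpleGraph.fromRel_adj, hrel, hrel, eq_comm (a := u), up_eq_iff,
    eq_comm (a := u), right_eq_iff]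
  grind

theorem neighborFinset_eq (hm : 3 ≤ m) (hn : 2 ≤ n) [DecidableRel (torusCordalis m n).Adj]
    (v : ZMod m × Fin n) :
    (torusCordalis m n).neighborFinset v = {up v, down v, right v, left v} := by
  ext u
  simp [adj_iff hm hn]

theorem isRegularOfDegree_four (hm : 3 ≤ m) (hn : 2 ≤ n)
    [DecidableRel (torusCordalis m n).Adj] : (torusCordalis m n).IsRegularOfDegree 4 := by
  intro v
  rw [← SimpleGraph.card_neighborFinset_eq_degree, neighborFinset_eq hm hn]
  simpa using List.toFinset_card_of_nodup (nodup_self_up_down_right_left hm hn v).of_cons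

variable {S : Set (ZMod m × Fin n)} {v : ZMod m × Fin n}

theorem activated_of_forall_neighbor_ne (hm : 3 ≤ m) (hn : 2 ≤ n) (w : ZMod m × Fin n)
    (h : ∀ u ∈ [up v, down v, right v, left v], u ≠ w →
      Activated (torusCordalis m n) (fun _ => 3) S u) :
    Activated (torusCordalis m n) (fun _ => 3) S v := by
  classical
  refine .of_forall_neighbor_ne w ?_ fun u hu => h u ?_
  · rw [isRegularOfDegree_four hm hn |>.degree_eq]
    omega
  · simpa [neighborFinset_eq hm hn] using hu

theorem activated_of_down_right_left (hm : 3 ≤ m) (hn : 2 ≤ n)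
    (hd : Activated (torusCordalis m n) (fun _ => 3) S (down v))
    (hr : Activated (torusCordalis m n) (fun _ => 3) S (right v))
    (hl : Activated (torusCordalis m n) (fun _ => 3) S (left v)) :
    Activated (torusCordalis m n) (fun _ => 3) S v :=
  activated_of_forall_neighbor_ne hm hn (up v) <| by
    simp only [List.mem_cons, List.not_mem_nil, or_false]
    rintro u (rfl | rfl | rfl | rfl) hne <;> first | exact absurd rfl hne | assumption

theorem activated_of_up_down_left (hm : 3 ≤ m) (hn : 2 ≤ n)
    (hu : Activated (torusCordalis m n) (fun _ => 3) S (up v))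
    (hd : Activated (torusCordalis m n) (fun _ => 3) S (down v))
    (hl : Activated (torusCordalis m n) (fun _ => 3) S (left v)) :
    Activated (torusCordalis m n) (fun _ => 3) S v :=
  activated_of_forall_neighbor_ne hm hn (right v) <| by
    simp only [List.mem_cons, List.not_mem_nil, or_false]
    rintro u (rfl | rfl | rfl | rfl) hne <;> first | exact absurd rfl hne | assumption

theorem activated_of_up_down_right (hm : 3 ≤ m) (hn : 2 ≤ n)
    (hu : Activated (torusCordalis m n) (fun _ => 3) S (up v))
    (hd : Activated (torusCordalis m n) (fun _ => 3) S (down v))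
    (hr : Activated (torusCordalis m n) (fun _ => 3) S (right v)) :
    Activated (torusCordalis m n) (fun _ => 3) S v :=
  activated_of_forall_neighbor_ne hm hn (left v) <| by
    simp only [List.mem_cons, List.not_mem_nil, or_false]
    rintro u (rfl | rfl | rfl | rfl) hne <;> first | exact absurd rfl hne | assumption

end Neighbors

section Coordinates

open Fin.NatCast

variable {m n : ℕ} [NeZero n]

/-- The coordinates are read modulo `m` and `n`. -/
def vertex (r j : ℕ) : ZMod m × Fin n := (r, j)

theorem vertex_val [NeZero m] (v : ZMod m × Fin n) : vertex v.1.val v.2.val = v := by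
  simp [vertex]

theorem vertex_injective {r r' j j' : ℕ} (hr : r < m) (hr' : r' < m) (hj : j < n) (hj' : j' < n)
    (h : (vertex r j : ZMod m × Fin n) = vertex r' j') : r = r' ∧ j = j' := by
  simp only [vertex, Prod.ext_iff, Fin.ext_iff, Fin.val_natCast, Nat.mod_eq_of_lt hj,
    Nat.mod_eq_of_lt hj'] at h
  refine ⟨?_, h.2⟩
  simpa [ZMod.val_cast_of_lt hr, ZMod.val_cast_of_lt hr'] using congrArg ZMod.val h.1

theorem up_vertex (r j : ℕ) : up (vertex r j : ZMod m × Fin n) = vertex (r + 1) j := by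
  simp [up, vertex]

theorem up_vertex_last [NeZero m] (j : ℕ) :
    up (vertex (m - 1) j : ZMod m × Fin n) = vertex 0 j := by
  rw [up_vertex, Nat.sub_add_cancel NeZero.one_le]
  simp [vertex]

theorem down_vertex {r : ℕ} (j : ℕ) (h : 0 < r) :
    down (vertex r j : ZMod m × Fin n) = vertex (r - 1) j := by
  simp [down, vertex, Nat.cast_sub (Nat.one_le_of_lt h)]

theorem down_vertex_zero [NeZero m] (j : ℕ) :
    down (vertex 0 j : ZMod m × Fin n) = vertex (m - 1) j := by
  simp [down, vertex, Nat.cast_sub NeZero.one_le]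

theorem right_vertex (r : ℕ) {j : ℕ} (h : j + 1 < n) :
    right (vertex r j : ZMod m × Fin n) = vertex r (j + 1) := by
  simp only [right, vertex, Fin.val_natCast, Nat.mod_eq_of_lt (Nat.lt_of_succ_lt h), h, dite_true,
    Prod.ext_iff, Fin.ext_iff, Nat.mod_eq_of_lt h, and_self]

theorem left_vertex (r : ℕ) {j : ℕ} (h0 : 0 < j) (h : j < n) :
    left (vertex r j : ZMod m × Fin n) = vertex r (j - 1) := by
  simp only [left, vertex, Fin.val_natCast, Nat.mod_eq_of_lt h, h0.ne', dite_false,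
    Prod.ext_iff, Fin.ext_iff, Nat.mod_eq_of_lt (show j - 1 < n by omega), and_self]

theorem left_vertex_zero {r : ℕ} (h : 0 < r) :
    left (vertex r 0 : ZMod m × Fin n) = vertex (r - 1) (n - 1) := by
  simp [left, vertex, Fin.val_natCast, Nat.cast_sub (Nat.one_le_of_lt h), Fin.ext_iff,
    Nat.mod_eq_of_lt (show n - 1 < n from Nat.sub_lt NeZero.one_le one_pos)]

end Coordinates

variable {m s : ℕ} [NeZero m] [NeZero s]

def seedOffset (r : ℕ) : ℕ := if r = 0 then 0 else 2 - r % 2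

theorem seedOffset_lt_three (r : ℕ) : seedOffset r < 3 := by
  unfold seedOffset
  split_ifs <;> omega

def seedSet (m s : ℕ) [NeZero m] [NeZero s] : Finset (ZMod m × Fin (3 * s)) :=
  insert (vertex 0 (3 * s - 1))
    (univ.image fun p : Fin m × Fin s => vertex p.1 (3 * p.2 + seedOffset p.1))

theorem card_seedSet : #(seedSet m s) = m * s + 1 := by
  have hlt (p : Fin m × Fin s) : 3 * (p.2 : ℕ) + seedOffset p.1 < 3 * s := by
    have := seedOffset_lt_three p.1
    omega
  rw [seedSet, card_insert_of_notMem, card_image_of_injective, card_univ, Fintype.card_prod,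
    Fintype.card_fin, Fintype.card_fin]
  · rintro p q h
    obtain ⟨h1, h2⟩ := vertex_injective p.1.isLt q.1.isLt (hlt p) (hlt q) h
    have h1 : p.1 = q.1 := Fin.ext h1
    rw [h1] at h2
    exact Prod.ext h1 (Fin.ext (by omega))
  · simp only [mem_image, mem_univ, true_and, not_exists]
    intro p h
    obtain ⟨h1, h2⟩ := vertex_injective p.1.isLt (NeZero.pos m) (hlt p)
      (by have := NeZero.pos s; omega) h
    rw [h1, seedOffset, if_pos rfl] at h2
    omega

abbrev SeedActivated (m s : ℕ) [NeZero m] [NeZero s] (v : ZMod m × Fin (3 * s)) : Prop :=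
  Activated (torusCordalis m (3 * s)) (fun _ => 3) (seedSet m s : Set _) v

theorem seedActivated_of_seed {r j : ℕ} (hr : r < m) (hj : j < 3 * s)
    (h : r = 0 ∧ (j % 3 = 0 ∨ j = 3 * s - 1) ∨ r % 2 = 1 ∧ j % 3 = 1 ∨
      0 < r ∧ r % 2 = 0 ∧ j % 3 = 2) :
    SeedActivated m s (vertex r j) := by
  refine .base ?_
  rw [seedSet, coe_insert, Set.mem_insert_iff, coe_image, coe_univ, Set.image_univ]
  by_cases hextra : r = 0 ∧ j = 3 * s - 1
  · exact .inl (by rw [hextra.1, hextra.2])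
  refine .inr ⟨(⟨r, hr⟩, ⟨j / 3, by omega⟩), ?_⟩
  have : 3 * (j / 3) + seedOffset r = j := by
    unfold seedOffset
    split_ifs <;> omega
  simp only [this]

theorem two_le_three_mul : 2 ≤ 3 * s := by
  have := NeZero.pos s
  omega

section Percolation

variable (hm : 3 ≤ m) (hodd : m % 2 = 1)
include hm hodd

theorem seedActivated_of_mod_three_eq_one {r j : ℕ} (hr1 : 1 ≤ r)
    (hr : r ≤ m - 2) (hj : j < 3 * s) (h : j % 3 = 1) : SeedActivated m s (vertex r j) := by
  rcases Nat.mod_two_eq_zero_or_one r with heven | hodd_r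
  · refine activated_of_up_down_right hm two_le_three_mul ?_ ?_ ?_
    · rw [up_vertex]
      exact seedActivated_of_seed (by omega) hj (by omega)
    · rw [down_vertex _ (by omega)]
      exact seedActivated_of_seed (by omega) hj (by omega)
    · rw [right_vertex _ (by omega)]
      exact seedActivated_of_seed (by omega) (by omega) (by omega)
  · exact seedActivated_of_seed (by omega) hj (by omega)

theorem seedActivated_of_mod_three_eq_two {r j : ℕ} (hr2 : 2 ≤ r)
    (hr : r ≤ m - 1) (hj : j < 3 * s) (h : j % 3 = 2) : SeedActivated m s (vertex r j) := by
  rcases Nat.mod_two_eq_zero_or_one r with heven | hodd_r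
  · exact seedActivated_of_seed (by omega) hj (by omega)
  · refine activated_of_up_down_left hm two_le_three_mul ?_ ?_ ?_
    · rw [up_vertex]
      exact seedActivated_of_seed (by omega) hj (by omega)
    · rw [down_vertex _ (by omega)]
      exact seedActivated_of_seed (by omega) hj (by omega)
    · rw [left_vertex _ (by omega) hj]
      exact seedActivated_of_seed (by omega) (by omega) (by omega)

theorem seedActivated_one_last :
    SeedActivated m s (vertex 1 (3 * s - 1)) := by
  have := NeZero.pos s
  refine activated_of_up_down_left hm two_le_three_mul ?_ ?_ ?_
  · rw [up_vertex]
    exact seedActivated_of_mod_three_eq_two hm hodd le_rfl (by omega) (by omega) (by omega)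
  · rw [down_vertex _ one_pos]
    exact seedActivated_of_seed (by omega) (by omega) (by omega)
  · rw [left_vertex _ (by omega) (by omega)]
    exact seedActivated_of_mod_three_eq_one hm hodd le_rfl (by omega) (by omega) (by omega)

theorem seedActivated_one_zero :
    SeedActivated m s (vertex 1 0) := by
  have := NeZero.pos s
  refine activated_of_down_right_left hm two_le_three_mul ?_ ?_ ?_
  · rw [down_vertex _ one_pos]
    exact seedActivated_of_seed (by omega) (by omega) (by omega)
  · rw [right_vertex _ (by omega)]
    exact seedActivated_of_mod_three_eq_one hm hodd le_rfl (by omega) (by omega) (by omega)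
  · rw [left_vertex_zero one_pos]
    exact seedActivated_of_seed (by omega) (by omega) (by omega)

theorem seedActivated_left_of_mod_three_eq_zero {r j : ℕ}
    (hr2 : 2 ≤ r) (hr : r ≤ m - 1) (hj : j < 3 * s) (h : j % 3 = 0) :
    SeedActivated m s (left (vertex r j)) := by
  rcases Nat.eq_zero_or_pos j with rfl | hj0
  · rw [left_vertex_zero (by omega)]
    rcases (show r - 1 = 1 ∨ 2 ≤ r - 1 by omega) with h1 | h2
    · rw [h1]
      exact seedActivated_one_last hm hodd
    · exact seedActivated_of_mod_three_eq_two hm hodd h2 (by omega) (by omega) (by omega)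
  · rw [left_vertex _ hj0 hj]
    exact seedActivated_of_mod_three_eq_two hm hodd hr2 hr (by omega) (by omega)

theorem seedActivated_of_row_one {j : ℕ} (hj : j < 3 * s)
    (h : j % 3 = 0) (h1 : SeedActivated m s (vertex 1 j)) {r : ℕ} (hr1 : 1 ≤ r)
    (hr : r ≤ m - 1) :
    SeedActivated m s (vertex r j) := by
  induction r, hr1 using Nat.le_induction with
  | base => exact h1
  | succ r hr1 ih =>
    have hbelow : SeedActivated m s (down (vertex (r + 1) j)) := by
      rw [down_vertex _ (by omega), Nat.add_sub_cancel]
      exact ih (by omega)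
    have hleft := seedActivated_left_of_mod_three_eq_zero hm hodd (r := r + 1) (by omega) hr hj h
    rcases (show r + 1 ≤ m - 2 ∨ r + 1 = m - 1 by omega) with hlt | hlast
    · refine activated_of_down_right_left hm two_le_three_mul hbelow ?_ hleft
      rw [right_vertex _ (by omega)]
      exact seedActivated_of_mod_three_eq_one hm hodd (by omega) hlt (by omega) (by omega)
    · refine activated_of_up_down_left hm two_le_three_mul ?_ hbelow hleft
      rw [hlast, up_vertex_last]
      exact seedActivated_of_seed (by omega) hj (by omega)

section Block

variable {j : ℕ} (hj : j < 3 * s) (h : j % 3 = 0) (h1 : SeedActivated m s (vertex 1 j))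
include hj h h1

theorem seedActivated_last_succ : SeedActivated m s (vertex (m - 1) (j + 1)) := by
  refine activated_of_down_right_left hm two_le_three_mul ?_ ?_ ?_
  · rw [down_vertex _ (by omega)]
    exact seedActivated_of_mod_three_eq_one hm hodd (by omega) (by omega) (by omega) (by omega)
  · rw [right_vertex _ (by omega)]
    exact seedActivated_of_mod_three_eq_two hm hodd (by omega) le_rfl (by omega) (by omega)
  · rw [left_vertex _ (by omega) (by omega)]
    exact seedActivated_of_row_one hm hodd hj h h1 (by omega) le_rfl

theorem seedActivated_zero_succ : SeedActivated m s (vertex 0 (j + 1)) := by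
  refine activated_of_up_down_left hm two_le_three_mul ?_ ?_ ?_
  · rw [up_vertex]
    exact seedActivated_of_mod_three_eq_one hm hodd le_rfl (by omega) (by omega) (by omega)
  · rw [down_vertex_zero]
    exact seedActivated_last_succ hm hodd hj h h1
  · rw [left_vertex _ (by omega) (by omega)]
    exact seedActivated_of_seed (by omega) hj (by omega)

theorem seedActivated_zero_add_two : SeedActivated m s (vertex 0 (j + 2)) := by
  by_cases hlast : j + 2 = 3 * s - 1
  · exact seedActivated_of_seed (by omega) (by omega) (by omega)
  refine activated_of_down_right_left hm two_le_three_mul ?_ ?_ ?_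
  · rw [down_vertex_zero]
    exact seedActivated_of_mod_three_eq_two hm hodd (by omega) le_rfl (by omega) (by omega)
  · rw [right_vertex _ (by omega)]
    exact seedActivated_of_seed (by omega) (by omega) (by omega)
  · rw [left_vertex _ (by omega) (by omega)]
    exact seedActivated_zero_succ hm hodd hj h h1

theorem seedActivated_one_add_two : SeedActivated m s (vertex 1 (j + 2)) := by
  refine activated_of_up_down_left hm two_le_three_mul ?_ ?_ ?_
  · rw [up_vertex]
    exact seedActivated_of_mod_three_eq_two hm hodd le_rfl (by omega) (by omega) (by omega)
  · rw [down_vertex _ one_pos]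
    exact seedActivated_zero_add_two hm hodd hj h h1
  · rw [left_vertex _ (by omega) (by omega)]
    exact seedActivated_of_mod_three_eq_one hm hodd le_rfl (by omega) (by omega) (by omega)

theorem seedActivated_one_add_three (hj3 : j + 3 < 3 * s) :
    SeedActivated m s (vertex 1 (j + 3)) := by
  refine activated_of_down_right_left hm two_le_three_mul ?_ ?_ ?_
  · rw [down_vertex _ one_pos]
    exact seedActivated_of_seed (by omega) hj3 (by omega)
  · rw [right_vertex _ (by omega)]
    exact seedActivated_of_mod_three_eq_one hm hodd le_rfl (by omega) (by omega) (by omega)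
  · rw [left_vertex _ (by omega) hj3]
    exact seedActivated_one_add_two hm hodd hj h h1

end Block

theorem seedActivated_one_of_mod_three_eq_zero {j : ℕ}
    (hj : j < 3 * s) (h : j % 3 = 0) : SeedActivated m s (vertex 1 j) := by
  induction j using Nat.strong_induction_on with
  | _ j ih =>
    rcases Nat.eq_zero_or_pos j with rfl | hj0
    · exact seedActivated_one_zero hm hodd
    obtain ⟨i, rfl⟩ : ∃ i, j = i + 3 := ⟨j - 3, by omega⟩
    have h1 := ih i (by omega) (by omega) (by omega)
    exact seedActivated_one_add_three hm hodd (by omega) (by omega) h1 hj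

end Percolation

theorem seedActivated (hm : 3 ≤ m) (hodd : Odd m) (v : ZMod m × Fin (3 * s)) :
    SeedActivated m s v := by
  have hodd := Nat.odd_iff.1 hodd
  rw [← vertex_val v]
  have hr := v.1.val_lt
  have hj := v.2.isLt
  generalize v.1.val = r at hr ⊢
  generalize (v.2 : ℕ) = j at hj ⊢
  obtain ⟨i, hi⟩ : ∃ i, i % 3 = 0 ∧ (j = i ∨ j = i + 1 ∨ j = i + 2) :=
    ⟨3 * (j / 3), by omega⟩
  have h1 : SeedActivated m s (vertex 1 i) :=
    seedActivated_one_of_mod_three_eq_zero hm hodd (by omega) hi.1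
  rcases hi with ⟨hi, rfl | rfl | rfl⟩
  · rcases Nat.eq_zero_or_pos r with rfl | hr0
    · exact seedActivated_of_seed (by omega) hj (by omega)
    · exact seedActivated_of_row_one hm hodd (by omega) hi h1 hr0 (by omega)
  · rcases (show r = 0 ∨ (1 ≤ r ∧ r ≤ m - 2) ∨ r = m - 1 by omega) with rfl | hmid | rfl
    · exact seedActivated_zero_succ hm hodd (by omega) hi h1
    · exact seedActivated_of_mod_three_eq_one hm hodd hmid.1 hmid.2 hj (by omega)
    · exact seedActivated_last_succ hm hodd (by omega) hi h1
  · rcases (show r = 0 ∨ r = 1 ∨ 2 ≤ r by omega) with rfl | rfl | hr2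
    · exact seedActivated_zero_add_two hm hodd (by omega) hi h1
    · exact seedActivated_one_add_two hm hodd (by omega) hi h1
    · exact seedActivated_of_mod_three_eq_two hm hodd hr2 (by omega) hj (by omega)

end TorusCordalis

theorem minSeed_eq_of_forall_le {V : Type*} [Fintype V] {G : SimpleGraph V} {θ : V → ℕ}
    {k : ℕ} (hS : ∃ S : Finset V, #S = k ∧ ∀ v, Activated G θ S v)
    (hmin : ∀ S : Finset V, (∀ v, Activated G θ S v) → k ≤ #S) : minSeed G θ = k :=
  IsLeast.csInf_eq ⟨hS, fun _ ⟨S, hcard, hS⟩ => hcard ▸ hmin S hS⟩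

/-- If `m ≥ 5` is odd and `s ≥ 2`, then `min-seed(C_m ⊘ C_{3s}, 3) = ms + 1`. -/
theorem minSeed_torusCordalis_odd (m s : ℕ) [NeZero m] (hm : 5 ≤ m) (hodd : Odd m)
    (hs : 2 ≤ s) :
    minSeed (torusCordalis m (3 * s)) (fun _ => 3) = m * s + 1 := by
  classical
  have : NeZero s := ⟨by omega⟩
  refine minSeed_eq_of_forall_le ⟨TorusCordalis.seedSet m s, TorusCordalis.card_seedSet,
    TorusCordalis.seedActivated (by omega) hodd⟩ fun S hS => ?_
  have hreg : (torusCordalis m (3 * s)).IsRegularOfDegree 4 :=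
    TorusCordalis.isRegularOfDegree_four (by omega) TorusCordalis.two_le_three_mul
  have := hreg.card_add_one_le_three_mul_card hS
  rw [Fintype.card_prod, ZMod.card, Fintype.card_fin, mul_left_comm] at this
  omega
end
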